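/- arXiv:2107.07422 — 2 statements merged into one kernel-verified Lean document; each statement's English description precedes it below -/
import Mathlib

section
/- Let {X_n} be a sequence of compact metric spaces converging in the Gromov–Hausdorff sense to a compact metric space X, and let f_n : X_n → X be an approximately isometric sequence. Suppose γ_n : [0,1] → X_n is a sequence of paths, each parametrized proportionally to arc length, such that liminf_{n→∞} ℓ(γ_n) < ∞. Then there is a subsequence of f_n ∘ γ_n : [0,1] → X that converges uniformly to a (continuous) path γ : [0,1] → X with ℓ(γ) ≤ liminf_{n→∞} ℓ(γ_n). -/
open Filter Metric
open scoped Topology ENNReal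

/-!
STATEMENT 4: Arzelà–Ascoli along a Gromov–Hausdorff convergent sequence.

If compact metric spaces `Xₙ` converge in the Gromov–Hausdorff sense to a compact metric
space `Y`, `fₙ : Xₙ → Y` is an approximately isometric sequence, and `γₙ : [0,1] → Xₙ` are
paths parametrized proportionally to arc length with `liminf ℓ(γₙ) < ∞`, then a subsequence
of `fₙ ∘ γₙ` converges uniformly on `[0,1]` to a path `γ` in `Y` with
`ℓ(γ) ≤ liminf ℓ(γₙ)`.  Lengths of paths are total variations (`eVariationOn`).
-/

/-- `f` is an `ε`-isometry: `f X` is `ε`-dense and `f` distorts distances by less than `ε`. -/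
def IsEpsIsometry {X Y : Type*} [MetricSpace X] [MetricSpace Y] (ε : ℝ) (f : X → Y) : Prop :=
  (∀ y : Y, ∃ x : X, dist y (f x) < ε) ∧ ∀ x x' : X, |dist x x' - dist (f x) (f x')| < ε

/-!
The maps `fₙ ∘ γₙ` are asymptotically `ℓ(γₙ)`-Lipschitz: an `εₙ`-isometry adds at most `εₙ` to
distances, and a path parametrized proportionally to arc length is `ℓ(γₙ)`-Lipschitz. Along a
subsequence with `ℓ(γₙ) → liminf ℓ(γₙ) =: L`, the usual Arzelà–Ascoli argument (a diagonal
subsequence converging on a countable dense subset of `[0,1]`, upgraded to uniform convergence by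
the asymptotic Lipschitz bound) gives a uniform limit `g`, which inherits the bound and is
therefore `L`-Lipschitz; hence `ℓ(g) ≤ L`.
-/

open Set
open scoped NNReal

theorem exists_subseq_forall_tendsto_of_countable {α β : Type*} [TopologicalSpace β]
    [FirstCountableTopology β] [CompactSpace β] (G : ℕ → α → β) {t : Set α} (ht : t.Countable) :
    ∃ φ : ℕ → ℕ, StrictMono φ ∧ ∀ x ∈ t, ∃ y, Tendsto (fun n => G (φ n) x) atTop (𝓝 y) := by
  have := ht.to_subtype
  obtain ⟨F, φ, hφ, hF⟩ := CompactSpace.tendsto_subseq fun n (x : t) => G n x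
  exact ⟨φ, hφ, fun x hx => ⟨F ⟨x, hx⟩, tendsto_pi_nhds.1 hF ⟨x, hx⟩⟩⟩

section AsymptoticallyLipschitz

variable {α β : Type*} [PseudoMetricSpace α] [PseudoMetricSpace β]

theorem uniformCauchySeqOn_of_cauchySeq_of_dist_le {G : ℕ → α → β} {s t : Set α}
    (hs : IsCompact s) (hts : t ⊆ s) (hst : s ⊆ closure t)
    (hGt : ∀ x ∈ t, CauchySeq fun n => G n x) {C : ℝ≥0} {δ : ℕ → ℝ}
    (hδ : Tendsto δ atTop (𝓝 0))
    (hG : ∀ᶠ n in atTop, ∀ p ∈ s, ∀ q ∈ s, dist (G n p) (G n q) ≤ C * dist p q + δ n) :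
    UniformCauchySeqOn G atTop s := by
  intro u hu
  obtain ⟨η, hη, hηu⟩ := mem_uniformity_dist.1 hu
  set r := η / 6 / (C + 1)
  have hr : 0 < r := by positivity
  have hCr : C * r < η / 6 := by
    calc C * r < (C + 1) * r := by gcongr; linarith
      _ = η / 6 := mul_div_cancel₀ _ (by positivity)
  obtain ⟨c, hct, hc, hsc⟩ : ∃ c ⊆ t, c.Finite ∧ s ⊆ ⋃ x ∈ c, ball x r :=
    hs.elim_finite_subcover_image (fun _ _ => isOpen_ball) fun p hp =>
      let ⟨x, hx, hpx⟩ := Metric.mem_closure_iff.1 (hst hp) r hr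
      mem_biUnion hx (mem_ball.2 hpx)
  have hnet : ∀ᶠ mn in atTop ×ˢ atTop, ∀ x ∈ c, dist (G mn.1 x) (G mn.2 x) < η / 3 := by
    rw [eventually_all_finite hc, prod_atTop_atTop_eq]
    exact fun x hx => (cauchySeq_iff_tendsto_dist_atTop_0.1 (hGt x (hct hx))).eventually_lt_const
      (by positivity)
  have hsmall := hG.and (hδ.eventually_lt_const (show (0 : ℝ) < η / 6 by positivity))
  filter_upwards [hnet, tendsto_fst.eventually hsmall, tendsto_snd.eventually hsmall]
    with ⟨m, n⟩ hmn ⟨hGm, hδm⟩ ⟨hGn, hδn⟩ p hp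
  obtain ⟨x, hxc, hpx⟩ := mem_iUnion₂.1 (hsc hp)
  have hpx' : C * dist p x < η / 6 :=
    (mul_le_mul_of_nonneg_left (mem_ball.1 hpx).le C.2).trans_lt hCr
  refine hηu ?_
  calc dist (G m p) (G n p)
      ≤ dist (G m p) (G m x) + dist (G m x) (G n x) + dist (G n x) (G n p) := dist_triangle4 ..
    _ ≤ (C * dist p x + δ m) + dist (G m x) (G n x) + (C * dist x p + δ n) := by
        gcongr
        exacts [hGm p hp x (hts (hct hxc)), hGn x (hts (hct hxc)) p hp]
    _ < η := by rw [dist_comm x p]; linarith [hmn x hxc]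

theorem lipschitzOnWith_of_tendsto_of_dist_le {G : ℕ → α → β} {g : α → β} {s : Set α}
    (hGg : ∀ x ∈ s, Tendsto (fun n => G n x) atTop (𝓝 (g x))) {C : ℕ → ℝ≥0} {K : ℝ≥0}
    (hC : Tendsto C atTop (𝓝 K)) {δ : ℕ → ℝ} (hδ : Tendsto δ atTop (𝓝 0))
    (hG : ∀ᶠ n in atTop, ∀ p ∈ s, ∀ q ∈ s, dist (G n p) (G n q) ≤ C n * dist p q + δ n) :
    LipschitzOnWith K g s := by
  refine LipschitzOnWith.of_dist_le_mul fun p hp q hq => ?_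
  have hbound : Tendsto (fun n => (C n : ℝ) * dist p q + δ n) atTop (𝓝 (K * dist p q + 0)) :=
    ((NNReal.tendsto_coe.2 hC).mul_const _).add hδ
  simpa using le_of_tendsto_of_tendsto ((hGg p hp).dist (hGg q hq)) hbound
    (hG.mono fun n hn => hn p hp q hq)

theorem exists_subseq_tendstoUniformlyOn_of_dist_le [CompactSpace β] {s : Set α}
    (hs : IsCompact s) (G : ℕ → α → β) {C : ℕ → ℝ≥0} {K : ℝ≥0} (hC : Tendsto C atTop (𝓝 K))
    {δ : ℕ → ℝ} (hδ : Tendsto δ atTop (𝓝 0))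
    (hG : ∀ᶠ n in atTop, ∀ p ∈ s, ∀ q ∈ s, dist (G n p) (G n q) ≤ C n * dist p q + δ n) :
    ∃ φ : ℕ → ℕ, StrictMono φ ∧ ∃ g : α → β, LipschitzOnWith K g s ∧
      TendstoUniformlyOn (fun n => G (φ n)) g atTop s := by
  obtain ⟨t, hts, htc, hst⟩ := hs.isSeparable.exists_countable_dense_subset
  obtain ⟨φ, hφ, hGt⟩ := exists_subseq_forall_tendsto_of_countable G htc
  have hGφ := hφ.tendsto_atTop.eventually hG
  have hCφ := hC.comp hφ.tendsto_atTop
  have hδφ := hδ.comp hφ.tendsto_atTop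
  have hGφ' : ∀ᶠ n in atTop, ∀ p ∈ s, ∀ q ∈ s,
      dist (G (φ n) p) (G (φ n) q) ≤ (K + 1 : ℝ≥0) * dist p q + δ (φ n) := by
    filter_upwards [hGφ, hCφ.eventually_lt_const (lt_add_one K)] with n hn hCn p hp q hq
    exact (hn p hp q hq).trans (by gcongr; exact_mod_cast hCn.le)
  have hcauchy : UniformCauchySeqOn (fun n => G (φ n)) atTop s :=
    uniformCauchySeqOn_of_cauchySeq_of_dist_le hs hts hst
      (fun x hx => (hGt x hx).choose_spec.cauchySeq) hδφ hGφ'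
  have : CompleteSpace β := complete_of_compact
  let g : α → β := fun x => @limUnder _ _ _ ⟨G 0 x⟩ atTop fun n => G (φ n) x
  have hg : ∀ x ∈ s, Tendsto (fun n => G (φ n) x) atTop (𝓝 (g x)) := fun x hx =>
    have : Nonempty β := ⟨G 0 x⟩
    tendsto_nhds_limUnder (cauchySeq_tendsto_of_complete (hcauchy.cauchySeq hx))
  exact ⟨φ, hφ, g, lipschitzOnWith_of_tendsto_of_dist_le hg hCφ hδφ hGφ,
    hcauchy.tendstoUniformlyOn_of_tendsto hg⟩

end AsymptoticallyLipschitz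

theorem IsEpsIsometry.dist_le {X Y : Type*} [MetricSpace X] [MetricSpace Y] {ε : ℝ} {f : X → Y}
    (hf : IsEpsIsometry ε f) (x x' : X) : dist (f x) (f x') ≤ dist x x' + ε := by
  linarith [(abs_sub_lt_iff.1 (hf.2 x x')).2]

theorem lipschitzOnWith_of_edist_le_mul {E : Type*} [PseudoEMetricSpace E] {γ : ℝ → E}
    {s : Set ℝ} {ℓ : ℝ≥0∞} (hℓ : ℓ ≠ ∞)
    (hγ : ∀ p ∈ s, ∀ q ∈ s, edist (γ p) (γ q) ≤ ℓ * ENNReal.ofReal |p - q|) :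
    LipschitzOnWith ℓ.toNNReal γ s := fun p hp q hq => by
  rw [ENNReal.coe_toNNReal hℓ, edist_dist, Real.dist_eq]
  exact hγ p hp q hq

theorem LipschitzOnWith.eVariationOn_Icc_le {E : Type*} [PseudoEMetricSpace E] {g : ℝ → E}
    {K : ℝ≥0} {a b : ℝ} (hg : LipschitzOnWith K g (Icc a b)) :
    eVariationOn g (Icc a b) ≤ K * ENNReal.ofReal (b - a) := by
  simpa [eVariationOn_id_Icc] using hg.comp_eVariationOn_le (g := id) (mapsTo_id _)

theorem gh_arzela_ascoli_general
    (X : ℕ → Type) [∀ n, MetricSpace (X n)]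
    (Y : Type) [MetricSpace Y] [CompactSpace Y]
    -- an approximately isometric sequence `fₙ : Xₙ → Y`:
    (f : ∀ n, X n → Y) (ε : ℕ → ℝ) (hε0 : Tendsto ε atTop (𝓝 0))
    (hf : ∀ n, IsEpsIsometry (ε n) (f n))
    -- paths `γₙ : [0,1] → Xₙ`, parametrized proportionally to arc length:
    (γ : ∀ n, ℝ → X n)
    (hγp : ∀ n, ∀ p ∈ Set.Icc (0:ℝ) 1, ∀ q ∈ Set.Icc (0:ℝ) 1,
      edist (γ n p) (γ n q) ≤ eVariationOn (γ n) (Set.Icc 0 1) * ENNReal.ofReal |p - q|)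
    -- lengths have finite liminf:
    (hlen : liminf (fun n => eVariationOn (γ n) (Set.Icc 0 1)) atTop < ⊤) :
    ∃ φ : ℕ → ℕ, StrictMono φ ∧
      ∃ g : ℝ → Y, ContinuousOn g (Set.Icc 0 1) ∧
        TendstoUniformlyOn (fun n t => f (φ n) (γ (φ n) t)) g atTop (Set.Icc 0 1) ∧
        eVariationOn g (Set.Icc 0 1) ≤
          liminf (fun n => eVariationOn (γ n) (Set.Icc 0 1)) atTop := by
  set ℓ := fun n => eVariationOn (γ n) (Icc 0 1)
  obtain ⟨φ₀, hφ₀, hℓφ₀⟩ := (MapClusterPt.liminf (u := ℓ) (f := atTop)).tendsto_subseq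
  have hG : ∀ᶠ n in atTop, ∀ p ∈ Icc (0 : ℝ) 1, ∀ q ∈ Icc (0 : ℝ) 1,
      dist (f (φ₀ n) (γ (φ₀ n) p)) (f (φ₀ n) (γ (φ₀ n) q))
        ≤ (ℓ (φ₀ n)).toNNReal * dist p q + ε (φ₀ n) := by
    filter_upwards [hℓφ₀.eventually_lt_const hlen] with n hn p hp q hq
    calc _ ≤ dist (γ (φ₀ n) p) (γ (φ₀ n) q) + ε (φ₀ n) := (hf _).dist_le _ _
      _ ≤ _ := by
        gcongr
        exact (lipschitzOnWith_of_edist_le_mul hn.ne (hγp _)).dist_le_mul p hp q hq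
  obtain ⟨φ₁, hφ₁, g, hg, hconv⟩ := exists_subseq_tendstoUniformlyOn_of_dist_le isCompact_Icc _
    ((ENNReal.tendsto_toNNReal hlen.ne).comp hℓφ₀) (hε0.comp hφ₀.tendsto_atTop) hG
  refine ⟨φ₀ ∘ φ₁, hφ₀.comp hφ₁, g, hg.continuousOn, hconv, ?_⟩
  simpa [ENNReal.coe_toNNReal hlen.ne] using hg.eVariationOn_Icc_le

theorem gh_arzela_ascoli
    (X : ℕ → Type) [∀ n, MetricSpace (X n)] [∀ n, CompactSpace (X n)] [∀ n, Nonempty (X n)]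
    (Y : Type) [MetricSpace Y] [CompactSpace Y] [Nonempty Y]
    -- Gromov–Hausdorff convergence of `Xₙ` to `Y`:
    (hGH : Tendsto (fun n => GromovHausdorff.ghDist (X n) Y) atTop (𝓝 0))
    -- an approximately isometric sequence `fₙ : Xₙ → Y`:
    (f : ∀ n, X n → Y) (ε : ℕ → ℝ) (hε : ∀ n, 0 < ε n) (hε0 : Tendsto ε atTop (𝓝 0))
    (hf : ∀ n, IsEpsIsometry (ε n) (f n))
    -- paths `γₙ : [0,1] → Xₙ`, parametrized proportionally to arc length:
    (γ : ∀ n, ℝ → X n)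
    (hγc : ∀ n, ContinuousOn (γ n) (Set.Icc 0 1))
    (hγp : ∀ n, ∀ p ∈ Set.Icc (0:ℝ) 1, ∀ q ∈ Set.Icc (0:ℝ) 1,
      edist (γ n p) (γ n q) ≤ eVariationOn (γ n) (Set.Icc 0 1) * ENNReal.ofReal |p - q|)
    -- lengths have finite liminf:
    (hlen : liminf (fun n => eVariationOn (γ n) (Set.Icc 0 1)) atTop < ⊤) :
    ∃ φ : ℕ → ℕ, StrictMono φ ∧
      ∃ g : ℝ → Y, ContinuousOn g (Set.Icc 0 1) ∧
        TendstoUniformlyOn (fun n t => f (φ n) (γ (φ n) t)) g atTop (Set.Icc 0 1) ∧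
        eVariationOn g (Set.Icc 0 1) ≤
          liminf (fun n => eVariationOn (γ n) (Set.Icc 0 1)) atTop :=
  gh_arzela_ascoli_general X Y f ε hε0 hf γ hγp hlen
end

section
/- Let {X_n} be a sequence of compact length spaces converging in the Gromov–Hausdorff sense to a compact metric space X, and let f_n : X_n → X be an approximately isometric sequence. Then for each path γ : [0,1] → X and all sequences of points a_n, b_n ∈ X_n with lim_{n→∞} f_n(a_n) = γ(0) and lim_{n→∞} f_n(b_n) = γ(1), there exist paths γ_n : [0,1] → X_n with γ_n(0) = a_n and γ_n(1) = b_n such that f_n ∘ γ_n converges uniformly to γ. -/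
open Filter Metric
open scoped Topology ENNReal

/-- A curve in a metric space: a continuous map on a compact interval. -/
structure Curve (X : Type*) [MetricSpace X] where
  a : ℝ
  b : ℝ
  hab : a ≤ b
  toFun : ℝ → X
  cont : ContinuousOn toFun (Set.Icc a b)

/-- The length of a curve: the total variation of its parametrization. -/
noncomputable def Curve.length {X : Type*} [MetricSpace X] (γ : Curve X) : ℝ≥0∞ :=
  eVariationOn γ.toFun (Set.Icc γ.a γ.b)

/-- A length space: the distance between any two points is the infimum of the lengths
of curves joining them. -/
def IsLengthSpace (X : Type*) [MetricSpace X] : Prop :=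
  ∀ x y : X, edist x y =
    ⨅ γ : {γ : Curve X // γ.toFun γ.a = x ∧ γ.toFun γ.b = y}, γ.1.length

/-!
Fix `n` and let `θ` strictly exceed `εₙ` and the endpoint errors. Choose `M` by uniform continuity
of `g`, and let `x₀ = aₙ`, `x_M = bₙ` and otherwise `xᵢ` be a point with `fₙ xᵢ` within `εₙ` of
`g (i / M)`. Because `fₙ` distorts distances by less than `εₙ`, consecutive `xᵢ` are `4θ`-close,
and because `Xₙ` is a length space they are joined by paths that stay `8θ`-close to `xᵢ`. The
concatenation `γₙ` satisfies `dist (g t) (fₙ (γₙ t)) < 11θ`, and `θ` can be taken to tend to `0`.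
-/

open Set

section LengthSpace

variable {Z : Type*} [MetricSpace Z]

lemma Curve.edist_le_length (γ : Curve Z) {u : ℝ} (hu : u ∈ Icc γ.a γ.b) :
    edist (γ.toFun u) (γ.toFun γ.a) ≤ γ.length :=
  eVariationOn.edist_le γ.toFun hu ⟨le_rfl, γ.hab⟩

lemma Curve.exists_unitInterval_param (γ : Curve Z) :
    ∃ s : ℝ → Z, ContinuousOn s (Icc 0 1) ∧ s 0 = γ.toFun γ.a ∧ s 1 = γ.toFun γ.b ∧
      ∀ t ∈ Icc (0 : ℝ) 1, ∃ u ∈ Icc γ.a γ.b, s t = γ.toFun u := by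
  have hmaps : MapsTo (fun t : ℝ => γ.a + t * (γ.b - γ.a)) (Icc 0 1) (Icc γ.a γ.b) :=
    fun t ⟨h0, h1⟩ => ⟨by nlinarith [γ.hab], by nlinarith [γ.hab]⟩
  refine ⟨fun t => γ.toFun (γ.a + t * (γ.b - γ.a)), γ.cont.comp (by fun_prop) hmaps,
    by simp, by simp, fun t ht => ⟨_, hmaps ht, rfl⟩⟩

lemma IsLengthSpace.exists_path_near (hZ : IsLengthSpace Z) (x y : Z) {r : ℝ} (hr : 0 < r) :
    ∃ s : ℝ → Z, ContinuousOn s (Icc 0 1) ∧ s 0 = x ∧ s 1 = y ∧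
      ∀ t ∈ Icc (0 : ℝ) 1, dist (s t) x < dist x y + r := by
  have hlt : (⨅ γ : {γ : Curve Z // γ.toFun γ.a = x ∧ γ.toFun γ.b = y}, γ.1.length)
      < edist x y + ENNReal.ofReal r := by
    rw [← hZ x y]
    exact ENNReal.lt_add_right (edist_ne_top x y) (by simp [hr])
  obtain ⟨⟨γ, rfl, rfl⟩, hγ⟩ := iInf_lt_iff.mp hlt
  obtain ⟨s, hs, hs0, hs1, hsγ⟩ := γ.exists_unitInterval_param
  refine ⟨s, hs, hs0, hs1, fun t ht => ?_⟩
  obtain ⟨u, hu, hsu⟩ := hsγ t ht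
  rw [hsu]
  have := (γ.edist_le_length hu).trans_lt hγ
  rwa [edist_dist, edist_dist, ← ENNReal.ofReal_add dist_nonneg hr.le,
    ENNReal.ofReal_lt_ofReal_iff (by positivity)] at this

lemma IsLengthSpace.exists_path_along_chain (hZ : IsLengthSpace Z) (x : ℕ → Z) {r : ℝ}
    (hr : 0 < r) (k : ℕ) (hx : ∀ i < k, dist (x i) (x (i + 1)) ≤ r) :
    ∃ γ : ℝ → Z, ContinuousOn γ (Icc 0 k) ∧ γ 0 = x 0 ∧ γ k = x k ∧
      ∀ u ∈ Icc (0 : ℝ) k, ∃ i ≤ k, |u - i| ≤ 1 ∧ dist (γ u) (x i) < 2 * r := by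
  induction k with
  | zero =>
    refine ⟨fun _ => x 0, continuousOn_const, rfl, rfl, fun u hu => ⟨0, le_rfl, ?_, ?_⟩⟩
    · simp [le_antisymm hu.2 (by simpa using hu.1)]
    · simpa using hr
  | succ k ih =>
    obtain ⟨γ, hγ, hγ0, hγk, hγx⟩ := ih fun i hi => hx i (by omega)
    obtain ⟨s, hs, hs0, hs1, hsx⟩ := hZ.exists_path_near (x k) (x (k + 1)) hr
    have hk : (0 : ℝ) ≤ k := k.cast_nonneg
    have hstep := hx k k.lt_succ_self
    push_cast
    refine ⟨fun u => if u ≤ k then γ u else s (u - k), ?_, by simp [hk, hγ0], ?_, ?_⟩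
    · rw [← Icc_union_Icc_eq_Icc hk (by linarith)]
      refine ContinuousOn.union_of_isClosed ?_ ?_ isClosed_Icc isClosed_Icc
      · exact hγ.congr fun u hu => if_pos hu.2
      · have hshift : MapsTo (fun u : ℝ => u - k) (Icc k (k + 1)) (Icc 0 1) :=
          fun u hu => ⟨by linarith [hu.1], by linarith [hu.2]⟩
        refine (hs.comp (continuous_sub_right (k : ℝ)).continuousOn hshift).congr fun u hu => ?_
        rcases hu.1.eq_or_lt with rfl | hlt
        · simp [hγk, hs0]
        · simp [not_le.mpr hlt]
    · simp only [if_neg (show ¬((k : ℝ) + 1 ≤ k) by linarith), add_sub_cancel_left, hs1]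
    · intro u hu
      by_cases huk : u ≤ k
      · obtain ⟨i, hi, hui, hγi⟩ := hγx u ⟨hu.1, huk⟩
        exact ⟨i, by omega, hui, by simpa [huk] using hγi⟩
      · push Not at huk
        refine ⟨k, by omega, ?_, ?_⟩
        · rw [abs_of_pos (by linarith)]
          linarith [hu.2]
        · have := hsx (u - k) ⟨by linarith, by linarith [hu.2]⟩
          simp only [not_le.mpr huk, if_false]
          linarith

end LengthSpace

section EpsIsometry

variable {Z Y : Type*} [MetricSpace Z] [MetricSpace Y] {ε : ℝ} {f : Z → Y}

lemma IsEpsIsometry.dist_lt_dist_image_add (hf : IsEpsIsometry ε f) (x x' : Z) :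
    dist x x' < dist (f x) (f x') + ε := by
  linarith [(abs_lt.mp (hf.2 x x')).2]

lemma IsEpsIsometry.dist_image_lt_dist_add (hf : IsEpsIsometry ε f) (x x' : Z) :
    dist (f x) (f x') < dist x x' + ε := by
  linarith [(abs_lt.mp (hf.2 x x')).1]

lemma IsEpsIsometry.exists_chain_near (hf : IsEpsIsometry ε f) (g : ℝ → Y) {M : ℕ}
    (hM : 0 < M) {A B : Z} {θ : ℝ} (hεθ : ε ≤ θ) (hA : dist (f A) (g 0) < θ)
    (hB : dist (f B) (g 1) < θ) :
    ∃ x : ℕ → Z, x 0 = A ∧ x M = B ∧ ∀ i ≤ M, dist (f (x i)) (g (i / M)) < θ := by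
  choose p hp using hf.1
  refine ⟨fun i => if i = 0 then A else if i < M then p (g (i / M)) else B,
    by simp, by simp [hM.ne'], fun i hi => ?_⟩
  rcases Nat.eq_zero_or_pos i with rfl | hi0
  · simpa using hA
  rcases hi.lt_or_eq with hiM | rfl
  · simpa [hi0.ne', hiM, dist_comm] using (hp _).trans_le hεθ
  · simpa [hi0.ne', div_self (Nat.cast_pos.mpr hi0 : (0 : ℝ) < _).ne'] using hB

end EpsIsometry

lemma IsLengthSpace.exists_lift_path {Z Y : Type*} [MetricSpace Z] [MetricSpace Y]
    (hZ : IsLengthSpace Z) {ε θ : ℝ} {f : Z → Y} (hf : IsEpsIsometry ε f) (hεθ : ε < θ)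
    {g : ℝ → Y} (hg : ContinuousOn g (Icc 0 1)) {A B : Z} (hA : dist (f A) (g 0) < θ)
    (hB : dist (f B) (g 1) < θ) :
    ∃ γ : ℝ → Z, ContinuousOn γ (Icc 0 1) ∧ γ 0 = A ∧ γ 1 = B ∧
      ∀ t ∈ Icc (0 : ℝ) 1, dist (g t) (f (γ t)) < 11 * θ := by
  have hθ : 0 < θ := dist_nonneg.trans_lt hA
  obtain ⟨δ, hδ, hgδ⟩ := Metric.uniformContinuousOn_iff.mp
    (isCompact_Icc.uniformContinuousOn_of_continuous hg) θ hθ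
  obtain ⟨M, hM0, hMδ⟩ : ∃ M : ℕ, 0 < M ∧ 1 / (M : ℝ) < δ := by
    obtain ⟨m, hm⟩ := exists_nat_one_div_lt hδ
    exact ⟨m + 1, m.succ_pos, by simpa using hm⟩
  have hM : (0 : ℝ) < M := by positivity
  obtain ⟨x, hx0, hxM, hxg⟩ := hf.exists_chain_near g hM0 hεθ.le hA hB
  have hmem : ∀ i ≤ M, (i / M : ℝ) ∈ Icc (0 : ℝ) 1 := fun i hi =>
    ⟨by positivity, (div_le_one hM).mpr (by exact_mod_cast hi)⟩
  have hchain : ∀ i < M, dist (x i) (x (i + 1)) ≤ 4 * θ := by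
    intro i hi
    have hgg : dist (g (i / M)) (g ((i + 1 : ℕ) / M)) < θ := by
      refine hgδ _ (hmem i hi.le) _ (hmem (i + 1) hi) ?_
      rwa [Real.dist_eq, show (i / M : ℝ) - (i + 1 : ℕ) / M = -(1 / M) by push_cast; ring,
        abs_neg, abs_of_pos (by positivity)]
    have := hf.dist_lt_dist_image_add (x i) (x (i + 1))
    linarith [dist_triangle4 (f (x i)) (g (i / M)) (g ((i + 1 : ℕ) / M)) (f (x (i + 1))),
      hxg i hi.le, hxg (i + 1) hi, dist_comm (f (x (i + 1))) (g ((i + 1 : ℕ) / M))]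
  obtain ⟨c, hc, hc0, hcM, hcx⟩ := hZ.exists_path_along_chain x (by positivity) M hchain
  have hmaps : MapsTo (fun t : ℝ => M * t) (Icc 0 1) (Icc 0 M) :=
    fun t ht => ⟨by nlinarith [ht.1], by nlinarith [ht.2]⟩
  refine ⟨fun t => c (M * t), hc.comp (by fun_prop) hmaps, by simp [hc0, hx0],
    by simp [hcM, hxM], fun t ht => ?_⟩
  obtain ⟨i, hi, hti, hci⟩ := hcx _ (hmaps ht)
  have hgt : dist (g t) (g (i / M)) < θ := by
    refine hgδ t ht _ (hmem i hi) ?_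
    rw [Real.dist_eq, show t - i / M = (M * t - i) / M by field_simp, abs_div, abs_of_pos hM]
    exact (div_le_div_of_nonneg_right hti hM.le).trans_lt hMδ
  have := hf.dist_image_lt_dist_add (x i) (c (M * t))
  linarith [dist_triangle4 (g t) (g (i / M)) (f (x i)) (f (c (M * t))), hxg i hi,
    dist_comm (f (x i)) (g (i / M)), dist_comm (x i) (c (M * t))]

theorem gh_path_lifting_general
    (X : ℕ → Type) [∀ n, MetricSpace (X n)]
    (hXlen : ∀ n, IsLengthSpace (X n))
    (Y : Type) [MetricSpace Y]
    -- an approximately isometric sequence `fₙ : Xₙ → Y`: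
    (f : ∀ n, X n → Y) (ε : ℕ → ℝ) (hε : ∀ n, 0 < ε n) (hε0 : Tendsto ε atTop (𝓝 0))
    (hf : ∀ n, IsEpsIsometry (ε n) (f n))
    -- a path `g : [0,1] → Y`:
    (g : ℝ → Y) (hg : ContinuousOn g (Set.Icc 0 1))
    -- approximate endpoints:
    (a b : ∀ n, X n)
    (ha : Tendsto (fun n => f n (a n)) atTop (𝓝 (g 0)))
    (hb : Tendsto (fun n => f n (b n)) atTop (𝓝 (g 1))) :
    ∃ γ : ∀ n, ℝ → X n,
      (∀ n, ContinuousOn (γ n) (Set.Icc 0 1)) ∧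
      (∀ n, γ n 0 = a n) ∧ (∀ n, γ n 1 = b n) ∧
      TendstoUniformlyOn (fun n t => f n (γ n t)) g atTop (Set.Icc 0 1) := by
  -- `θ n` strictly exceeds `ε n` and both endpoint errors, and still tends to `0`
  set θ : ℕ → ℝ := fun n => 2 * ε n + dist (f n (a n)) (g 0) + dist (f n (b n)) (g 1)
  have hlift : ∀ n, ∃ γ : ℝ → X n, ContinuousOn γ (Icc 0 1) ∧ γ 0 = a n ∧ γ 1 = b n ∧
      ∀ t ∈ Icc (0 : ℝ) 1, dist (g t) (f n (γ t)) < 11 * θ n := by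
    intro n
    have hda : 0 ≤ dist (f n (a n)) (g 0) := dist_nonneg
    have hdb : 0 ≤ dist (f n (b n)) (g 1) := dist_nonneg
    exact (hXlen n).exists_lift_path (hf n) (by linarith [hε n]) hg (by linarith [hε n])
      (by linarith [hε n])
  choose γ hγ hγ0 hγ1 hγg using hlift
  have hθ : Tendsto (fun n => 11 * θ n) atTop (𝓝 0) := by
    simpa using ((hε0.const_mul 2).add (tendsto_iff_dist_tendsto_zero.mp ha)).add
      (tendsto_iff_dist_tendsto_zero.mp hb) |>.const_mul 11
  refine ⟨γ, hγ, hγ0, hγ1, Metric.tendstoUniformlyOn_iff.mpr fun η hη => ?_⟩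
  filter_upwards [hθ.eventually (gt_mem_nhds hη)] with n hn t ht
  exact (hγg n t ht).trans hn

theorem gh_path_lifting
    (X : ℕ → Type) [∀ n, MetricSpace (X n)] [∀ n, CompactSpace (X n)] [∀ n, Nonempty (X n)]
    (hXlen : ∀ n, IsLengthSpace (X n))
    (Y : Type) [MetricSpace Y] [CompactSpace Y] [Nonempty Y]
    -- Gromov–Hausdorff convergence of `Xₙ` to `Y`:
    (hGH : Tendsto (fun n => GromovHausdorff.ghDist (X n) Y) atTop (𝓝 0))
    -- an approximately isometric sequence `fₙ : Xₙ → Y`: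
    (f : ∀ n, X n → Y) (ε : ℕ → ℝ) (hε : ∀ n, 0 < ε n) (hε0 : Tendsto ε atTop (𝓝 0))
    (hf : ∀ n, IsEpsIsometry (ε n) (f n))
    -- a path `g : [0,1] → Y`:
    (g : ℝ → Y) (hg : ContinuousOn g (Set.Icc 0 1))
    -- approximate endpoints:
    (a b : ∀ n, X n)
    (ha : Tendsto (fun n => f n (a n)) atTop (𝓝 (g 0)))
    (hb : Tendsto (fun n => f n (b n)) atTop (𝓝 (g 1))) :
    ∃ γ : ∀ n, ℝ → X n,
      (∀ n, ContinuousOn (γ n) (Set.Icc 0 1)) ∧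
      (∀ n, γ n 0 = a n) ∧ (∀ n, γ n 1 = b n) ∧
      TendstoUniformlyOn (fun n t => f n (γ n t)) g atTop (Set.Icc 0 1) :=
  gh_path_lifting_general X hXlen Y f ε hε hε0 hf g hg a b ha hb
end
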